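/- Let d ≥ 3 and let R, W, β > 0 with W ≤ R. Let ∂'U = {z ∈ ℝ^d : |z_1| < R, z_2²+⋯+z_d² = W²}, let ν = β·ν_{R,W}, and let S = {z ∈ ∂'U : |z_1| ≥ R/2}. Then there exists C > 0 depending only on d such that for every x ∈ ℝ^d with |x_1| ≤ R/3 and x_2²+⋯+x_d² ≤ (W/3)², |∫_S (w-x)/|w-x|^d dν(w)| ≤ C·β·W^{d-2}·R^{-(d-2)}. -/

import Mathlib

open MeasureTheory

/-- The lateral cylinder surface `P_{L,W} = {x ∈ ℝ^d : |x_1| ≤ L, x_2²+⋯+x_d² = W²}`. -/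
def cylSurf (d : ℕ) (h0 : 0 < d) (L W : ℝ) : Set (EuclideanSpace ℝ (Fin d)) :=
  {x | |x ⟨0, h0⟩| ≤ L ∧
    ∑ i ∈ Finset.univ.filter (fun i : Fin d => i ≠ ⟨0, h0⟩), (x i) ^ 2 = W ^ 2}

/-- The measure `ν_{L,W}` on `P_{L,W}`: absolutely continuous with respect to the
`(d-1)`-dimensional Hausdorff (surface area) measure, with density
`v(x_1) = 1 + (x_1+L)/(2L)` increasing linearly from `1` to `2`. -/
noncomputable def cylMeasure (d : ℕ) (h0 : 0 < d) (L W : ℝ) :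
    Measure (EuclideanSpace ℝ (Fin d)) :=
  ((μH[((d : ℝ) - 1)]).restrict (cylSurf d h0 L W)).withDensity
    (fun x => ENNReal.ofReal (1 + (x ⟨0, h0⟩ + L) / (2 * L)))

/-! On `S` we have `|w₁ - x₁| ≥ R/2 - R/3 = R/6`, so the kernel is at most `(R/6)^{-(d-1)}` and
the force at most that times the mass `β ν_{R,W}(P_{R,W}) ≤ 2β μH^{d-1}(P_{R,W})`; it remains to
show that the cylinder has area `O(R W^{d-2})`. Each of its points has a radial coordinate with
`|w_i| ≥ W/d`, so it is covered by the `2(d-1)` pieces `{W ≤ d s w_i}`, `s = ±1`. On a piece,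
`(w_i - w'_i)(w_i + w'_i) = ∑_j (w'_j - w_j)(w'_j + w_j)` with `|w_i + w'_i| ≥ 2W/d` shows that
the projection forgetting `w_i` has a `d³`-Lipschitz inverse, and its image lies in a box of
volume `2R (2W)^{d-2}`. -/

open scoped ENNReal NNReal

theorem hausdorffMeasure_le_mul_hausdorffMeasure_image {X Y : Type*} [EMetricSpace X]
    [EMetricSpace Y] [MeasurableSpace X] [BorelSpace X] [MeasurableSpace Y] [BorelSpace Y]
    {f : X → Y} {s : Set X} {K : ℝ≥0}
    (hf : ∀ x ∈ s, ∀ y ∈ s, edist x y ≤ K * edist (f x) (f y)) {d : ℝ} (hd : 0 ≤ d) :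
    μH[d] s ≤ (K : ℝ≥0∞) ^ d * μH[d] (f '' s) := by
  have hanti : AntilipschitzWith K (s.domRestrict f) := fun x y => hf x x.2 y y.2
  have hval : μH[d] s = μH[d] (Set.univ : Set s) := by
    simpa using (isometry_subtype_coe (s := s)).hausdorffMeasure_image (Or.inl hd) Set.univ
  rw [hval, ← Set.range_domRestrict, ← Set.image_univ]
  exact hanti.le_hausdorffMeasure_image hd Set.univ

theorem EuclideanSpace.dist_le_card_mul {ι : Type*} [Fintype ι] {x y : EuclideanSpace ℝ ι}
    {c : ℝ} (hc : 0 ≤ c) (h : ∀ k, |x k - y k| ≤ c) : dist x y ≤ Fintype.card ι * c := by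
  have hcard : (Fintype.card ι : ℝ) ≤ (Fintype.card ι : ℝ) ^ 2 := by
    exact_mod_cast Nat.le_self_pow two_ne_zero _
  rw [EuclideanSpace.dist_eq, Real.sqrt_le_left (by positivity)]
  calc ∑ k, dist (x k) (y k) ^ 2 ≤ ∑ _k : ι, c ^ 2 :=
        Finset.sum_le_sum fun k _ => pow_le_pow_left₀ dist_nonneg (h k) 2
    _ ≤ (Fintype.card ι * c) ^ 2 := by
        rw [Finset.sum_const, Finset.card_univ, nsmul_eq_mul, mul_pow]
        exact mul_le_mul_of_nonneg_right hcard (sq_nonneg c)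

theorem norm_inv_norm_pow_succ_smul_le {E : Type*} [NormedAddCommGroup E] [NormedSpace ℝ E]
    {v : E} {r : ℝ} (hr : 0 < r) (hv : r ≤ ‖v‖) (n : ℕ) :
    ‖(‖v‖ ^ (n + 1))⁻¹ • v‖ ≤ (r ^ n)⁻¹ := by
  have hv0 : ‖v‖ ≠ 0 := (hr.trans_le hv).ne'
  rw [norm_smul, norm_inv, norm_pow, norm_norm, pow_succ, mul_inv, mul_assoc,
    inv_mul_cancel₀ hv0, mul_one]
  exact inv_anti₀ (by positivity) (pow_le_pow_left₀ hr.le hv n)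

section Cylinder

variable {d : ℕ} (h0 : 0 < d) {L W : ℝ}

def cylPiece (d : ℕ) (h0 : 0 < d) (L W : ℝ) (i : Fin d) (s : ℝ) :
    Set (EuclideanSpace ℝ (Fin d)) :=
  {w | w ∈ cylSurf d h0 L W ∧ W ≤ d * (s * w i)}

def dropCoord {ι : Type*} (i : ι) (w : EuclideanSpace ℝ ι) : {k // k ≠ i} → ℝ :=
  fun k => w k

theorem abs_apply_le_of_mem_cylSurf (hW : 0 ≤ W) {w : EuclideanSpace ℝ (Fin d)}
    (hw : w ∈ cylSurf d h0 L W) {j : Fin d} (hj : j ≠ ⟨0, h0⟩) : |w j| ≤ W := by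
  refine abs_le_of_sq_le_sq ?_ hW
  rw [← hw.2]
  exact Finset.single_le_sum (f := fun k => w k ^ 2) (fun k _ => sq_nonneg _)
    (Finset.mem_filter.2 ⟨Finset.mem_univ j, hj⟩)

theorem cylSurf_subset_biUnion_cylPiece (hW : 0 < W) :
    cylSurf d h0 L W ⊆ ⋃ i ∈ Finset.univ.filter (fun i : Fin d => i ≠ ⟨0, h0⟩),
      ⋃ s ∈ ({-1, 1} : Finset ℝ), cylPiece d h0 L W i s := by
  intro w hw
  set F := Finset.univ.filter (fun i : Fin d => i ≠ ⟨0, h0⟩)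
  have hsum : ∑ j ∈ F, w j ^ 2 = W ^ 2 := hw.2
  have hF : F.Nonempty := by
    by_contra hF
    rw [Finset.not_nonempty_iff_eq_empty.1 hF, Finset.sum_empty] at hsum
    nlinarith
  have hcard : (F.card : ℝ) ≤ d := by
    exact_mod_cast (Finset.card_filter_le _ _).trans (Finset.card_fin d).le
  obtain ⟨i, hi, hwi⟩ : ∃ i ∈ F, W ^ 2 / d ≤ w i ^ 2 := by
    refine Finset.exists_le_of_sum_le hF ?_
    rw [hsum, Finset.sum_const, nsmul_eq_mul, mul_div_assoc', div_le_iff₀ (by positivity)]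
    exact (mul_le_mul_of_nonneg_right hcard (sq_nonneg W)).trans_eq (mul_comm _ _)
  have hd1 : (1 : ℝ) ≤ d := by exact_mod_cast h0
  have hWi : W ≤ d * |w i| := by
    rw [div_le_iff₀ (by positivity)] at hwi
    refine (abs_le_of_sq_le_sq ?_ (by positivity)).trans' (le_abs_self W)
    rw [mul_pow, sq_abs]
    nlinarith [sq_nonneg (w i)]
  simp only [Set.mem_iUnion]
  refine ⟨i, hi, ?_⟩
  rcases le_total 0 (w i) with hpos | hneg
  · exact ⟨1, by simp, hw, by rwa [one_mul, ← abs_of_nonneg hpos]⟩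
  · exact ⟨-1, by simp, hw, by rwa [neg_one_mul, ← abs_of_nonpos hneg]⟩

theorem abs_sub_le_of_mem_cylPiece (hW : 0 < W) {i : Fin d} (hi : i ≠ ⟨0, h0⟩) {s : ℝ}
    (hs : |s| ≤ 1) {w w' : EuclideanSpace ℝ (Fin d)} (hw : w ∈ cylPiece d h0 L W i s)
    (hw' : w' ∈ cylPiece d h0 L W i s) :
    |w i - w' i| ≤ d ^ 2 * dist (dropCoord i w) (dropCoord i w') := by
  set δ := dist (dropCoord i w) (dropCoord i w')
  set F := Finset.univ.filter (fun j : Fin d => j ≠ ⟨0, h0⟩)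
  set J := F.erase i
  have hiF : i ∈ F := Finset.mem_filter.2 ⟨Finset.mem_univ i, hi⟩
  have hident : (w i - w' i) * (w i + w' i) = ∑ j ∈ J, (w' j - w j) * (w' j + w j) := by
    have hsum : ∑ j ∈ F, w j ^ 2 = ∑ j ∈ F, w' j ^ 2 := hw.1.2.trans hw'.1.2.symm
    rw [← Finset.add_sum_erase F _ hiF, ← Finset.add_sum_erase F _ hiF] at hsum
    have hJ : ∑ j ∈ J, (w' j - w j) * (w' j + w j) = ∑ j ∈ J, w' j ^ 2 - ∑ j ∈ J, w j ^ 2 := by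
      rw [← Finset.sum_sub_distrib]
      exact Finset.sum_congr rfl fun _ _ => by ring
    rw [hJ]
    linear_combination hsum
  have hterm : ∀ j ∈ J, |(w' j - w j) * (w' j + w j)| ≤ δ * (2 * W) := by
    intro j hj
    obtain ⟨hji, hjF⟩ := Finset.mem_erase.1 hj
    have hja := (Finset.mem_filter.1 hjF).2
    have hδ : |w' j - w j| ≤ δ := by
      rw [abs_sub_comm, ← Real.dist_eq]
      exact dist_le_pi_dist (dropCoord i w) (dropCoord i w') ⟨j, hji⟩
    have h2W : |w' j + w j| ≤ 2 * W := (abs_add_le _ _).trans (by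
      linarith [abs_apply_le_of_mem_cylSurf h0 hW.le hw.1 hja,
        abs_apply_le_of_mem_cylSurf h0 hW.le hw'.1 hja])
    rw [abs_mul]
    exact mul_le_mul hδ h2W (abs_nonneg _) dist_nonneg
  have hupper : |∑ j ∈ J, (w' j - w j) * (w' j + w j)| ≤ d * (δ * (2 * W)) := by
    have hcard : (J.card : ℝ) ≤ d := by
      exact_mod_cast (Finset.card_erase_le.trans (Finset.card_filter_le _ _)).trans
        (Finset.card_fin d).le
    calc _ ≤ ∑ j ∈ J, |(w' j - w j) * (w' j + w j)| := Finset.abs_sum_le_sum_abs _ _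
      _ ≤ J.card * (δ * (2 * W)) := by
          simpa using Finset.sum_le_card_nsmul J _ _ hterm
      _ ≤ d * (δ * (2 * W)) := by gcongr
  have hlower : 2 * W ≤ d * |w i + w' i| := by
    have hsx : s * (w i + w' i) ≤ |w i + w' i| :=
      (le_abs_self _).trans (by rw [abs_mul]; exact mul_le_of_le_one_left (abs_nonneg _) hs)
    nlinarith [hw.2, hw'.2]
  have hkey : |w i - w' i| * (2 * W) ≤ (d ^ 2 * δ) * (2 * W) :=
    calc |w i - w' i| * (2 * W) ≤ |w i - w' i| * (d * |w i + w' i|) := by gcongr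
      _ = d * |∑ j ∈ J, (w' j - w j) * (w' j + w j)| := by rw [← hident, abs_mul]; ring
      _ ≤ d * (d * (δ * (2 * W))) := by gcongr
      _ = (d ^ 2 * δ) * (2 * W) := by ring
  exact le_of_mul_le_mul_right hkey (by positivity)

theorem dist_le_of_mem_cylPiece (hW : 0 < W) {i : Fin d} (hi : i ≠ ⟨0, h0⟩) {s : ℝ}
    (hs : |s| ≤ 1) {w w' : EuclideanSpace ℝ (Fin d)} (hw : w ∈ cylPiece d h0 L W i s)
    (hw' : w' ∈ cylPiece d h0 L W i s) :
    dist w w' ≤ d ^ 3 * dist (dropCoord i w) (dropCoord i w') := by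
  have hd1 : (1 : ℝ) ≤ d := by exact_mod_cast h0
  have hδ : 0 ≤ dist (dropCoord i w) (dropCoord i w') := dist_nonneg
  calc dist w w' ≤ Fintype.card (Fin d) * (d ^ 2 * dist (dropCoord i w) (dropCoord i w')) := by
        refine EuclideanSpace.dist_le_card_mul (by positivity) fun k => ?_
        by_cases hk : k = i
        · subst hk
          exact abs_sub_le_of_mem_cylPiece h0 hW hi hs hw hw'
        · refine (dist_le_pi_dist (dropCoord i w) (dropCoord i w') ⟨k, hk⟩).trans ?_
          exact le_mul_of_one_le_left hδ (one_le_pow₀ hd1)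
    _ = d ^ 3 * dist (dropCoord i w) (dropCoord i w') := by rw [Fintype.card_fin]; ring

theorem volume_dropCoord_image_cylSurf_le (hW : 0 ≤ W) {i : Fin d} (hi : i ≠ ⟨0, h0⟩) :
    volume (dropCoord i '' cylSurf d h0 L W) ≤ ENNReal.ofReal (2 * L * (2 * W) ^ (d - 2)) := by
  set a : Fin d := ⟨0, h0⟩
  set B : Fin d → ℝ := fun k => if k = a then L else W
  have hbox : dropCoord i '' cylSurf d h0 L W ⊆
      Set.univ.pi fun k : {k // k ≠ i} => Set.Icc (-B k) (B k) := by
    rintro _ ⟨w, hw, rfl⟩ k -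
    rw [Set.mem_Icc, ← abs_le]
    by_cases hk : (k : Fin d) = a
    · simpa [B, hk, dropCoord] using hw.1
    · simpa [B, hk, dropCoord] using abs_apply_le_of_mem_cylSurf h0 hW hw hk
  refine (measure_mono hbox).trans_eq ?_
  have hai : a ∈ Finset.univ.erase i := Finset.mem_erase.2 ⟨hi.symm, Finset.mem_univ a⟩
  rw [volume_pi_pi, ← Finset.prod_subtype (Finset.univ.erase i) (by simp)
    (fun k => volume (Set.Icc (-B k) (B k))), ← Finset.mul_prod_erase _ _ hai,
    Finset.prod_congr rfl fun k hk => by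
      rw [Real.volume_Icc, show B k = W from if_neg (Finset.ne_of_mem_erase hk)],
    Finset.prod_const, Real.volume_Icc, show B a = L from if_pos rfl,
    Finset.card_erase_of_mem (Finset.mem_erase.2 ⟨hi.symm, Finset.mem_univ a⟩),
    Finset.card_erase_of_mem (Finset.mem_univ i), Finset.card_univ, Fintype.card_fin,
    ENNReal.ofReal_mul' (by positivity), ENNReal.ofReal_pow (by positivity), Nat.sub_sub]
  ring_nf

theorem hausdorffMeasure_cylPiece_le (hW : 0 < W) {i : Fin d} (hi : i ≠ ⟨0, h0⟩) {s : ℝ}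
    (hs : |s| ≤ 1) :
    μH[(d : ℝ) - 1] (cylPiece d h0 L W i s) ≤
      ENNReal.ofReal ((d : ℝ) ^ (3 * (d - 1)) * (2 * L * (2 * W) ^ (d - 2))) := by
  have hdim : (d : ℝ) - 1 = Fintype.card {k // k ≠ i} := by simp [Nat.cast_pred h0]
  have hK : ∀ w ∈ cylPiece d h0 L W i s, ∀ w' ∈ cylPiece d h0 L W i s,
      edist w w' ≤ ((d ^ 3 : ℝ≥0) : ℝ≥0∞) * edist (dropCoord i w) (dropCoord i w') := by
    intro w hw w' hw'
    rw [edist_dist, edist_dist, ← ENNReal.ofReal_coe_nnreal, ← ENNReal.ofReal_mul (by positivity)]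
    exact ENNReal.ofReal_le_ofReal (by simpa using dist_le_of_mem_cylPiece h0 hW hi hs hw hw')
  calc μH[(d : ℝ) - 1] (cylPiece d h0 L W i s)
      ≤ ((d ^ 3 : ℝ≥0) : ℝ≥0∞) ^ ((d : ℝ) - 1) *
          μH[(d : ℝ) - 1] (dropCoord i '' cylPiece d h0 L W i s) :=
        hausdorffMeasure_le_mul_hausdorffMeasure_image hK (sub_nonneg.2 (by exact_mod_cast h0))
    _ ≤ ENNReal.ofReal ((d : ℝ) ^ (3 * (d - 1))) * volume (dropCoord i '' cylSurf d h0 L W) := by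
        rw [hdim, hausdorffMeasure_pi_real, ENNReal.rpow_natCast, ← ENNReal.ofReal_coe_nnreal,
          ← ENNReal.ofReal_pow (by positivity), pow_mul]
        gcongr
        · simp
        · exact fun w hw => hw.1
    _ ≤ _ := by
        rw [ENNReal.ofReal_mul (by positivity)]
        gcongr
        exact volume_dropCoord_image_cylSurf_le h0 hW.le hi

theorem hausdorffMeasure_cylSurf_le (hW : 0 < W) :
    μH[(d : ℝ) - 1] (cylSurf d h0 L W) ≤
      ENNReal.ofReal (2 * d * ((d : ℝ) ^ (3 * (d - 1)) * (2 * L * (2 * W) ^ (d - 2)))) := by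
  set F := Finset.univ.filter (fun i : Fin d => i ≠ ⟨0, h0⟩)
  set M := ENNReal.ofReal ((d : ℝ) ^ (3 * (d - 1)) * (2 * L * (2 * W) ^ (d - 2)))
  have hpiece : ∀ i ∈ F, ∀ s ∈ ({-1, 1} : Finset ℝ),
      μH[(d : ℝ) - 1] (cylPiece d h0 L W i s) ≤ M := by
    intro i hi s hs
    refine hausdorffMeasure_cylPiece_le h0 hW (Finset.mem_filter.1 hi).2 ?_
    rcases Finset.mem_insert.1 hs with rfl | hs <;> simp_all
  have hcard : (F.card : ℝ≥0∞) ≤ d := by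
    exact_mod_cast (Finset.card_filter_le _ _).trans (Finset.card_fin d).le
  calc μH[(d : ℝ) - 1] (cylSurf d h0 L W)
      ≤ ∑ i ∈ F, μH[(d : ℝ) - 1] (⋃ s ∈ ({-1, 1} : Finset ℝ), cylPiece d h0 L W i s) :=
        (measure_mono (cylSurf_subset_biUnion_cylPiece h0 hW)).trans
          (measure_biUnion_finset_le _ _)
    _ ≤ ∑ i ∈ F, ∑ s ∈ ({-1, 1} : Finset ℝ), μH[(d : ℝ) - 1] (cylPiece d h0 L W i s) :=
        Finset.sum_le_sum fun _ _ => measure_biUnion_finset_le _ _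
    _ ≤ ∑ _i ∈ F, ∑ _s ∈ ({-1, 1} : Finset ℝ), M :=
        Finset.sum_le_sum fun i hi => Finset.sum_le_sum fun s hs => hpiece i hi s hs
    _ = 2 * F.card * M := by
        rw [Finset.sum_const, Finset.sum_const, Finset.card_pair (by norm_num), nsmul_eq_mul,
          nsmul_eq_mul]
        push_cast
        ring
    _ ≤ 2 * d * M := by gcongr
    _ = _ := by
        rw [ENNReal.ofReal_mul (by positivity), ENNReal.ofReal_mul (by positivity),
          ENNReal.ofReal_ofNat, ENNReal.ofReal_natCast]

theorem cylMeasure_univ_le :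
    cylMeasure d h0 L W Set.univ ≤ 2 * μH[(d : ℝ) - 1] (cylSurf d h0 L W) := by
  rw [cylMeasure, withDensity_apply _ MeasurableSet.univ, Measure.restrict_univ,
    ← setLIntegral_const]
  refine setLIntegral_mono measurable_const fun w hw => ?_
  have hL : |w ⟨0, h0⟩| ≤ L := hw.1
  refine ENNReal.ofReal_le_of_le_toReal ?_
  rw [ENNReal.toReal_ofNat]
  have : (w ⟨0, h0⟩ + L) / (2 * L) ≤ 1 :=
    div_le_one_of_le₀ (by linarith [le_abs_self (w ⟨0, h0⟩)])
      (by linarith [abs_nonneg (w ⟨0, h0⟩)])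
  linarith

theorem cylMeasure_univ_le_ofReal (hW : 0 < W) :
    cylMeasure d h0 L W Set.univ ≤
      ENNReal.ofReal (2 * (2 * d * ((d : ℝ) ^ (3 * (d - 1)) * (2 * L * (2 * W) ^ (d - 2))))) := by
  rw [ENNReal.ofReal_mul zero_le_two, ENNReal.ofReal_ofNat]
  exact (cylMeasure_univ_le h0).trans (by gcongr; exact hausdorffMeasure_cylSurf_le h0 hW)

end Cylinder

/-- Let `d ≥ 3` and `R, W, β > 0` with `W ≤ R`. Let
`∂'U = {z : |z_1| < R, z_2²+⋯+z_d² = W²}`, `ν = β·ν_{R,W}` and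
`S = {z ∈ ∂'U : |z_1| ≥ R/2}`. There exists `C > 0` depending only on `d` such that for
every `x` with `|x_1| ≤ R/3` and `x_2²+⋯+x_d² ≤ (W/3)²`,
`|∫_S (w-x)/|w-x|^d dν(w)| ≤ C·β·W^{d-2}·R^{-(d-2)}`. -/
theorem wormhole_outer_halves_force_bound (d : ℕ) (hd : 3 ≤ d) :
    ∃ C : ℝ, 0 < C ∧
      ∀ R W β : ℝ, 0 < R → 0 < W → 0 < β → W ≤ R →
      ∀ x : EuclideanSpace ℝ (Fin d), |x ⟨0, by omega⟩| ≤ R / 3 →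
        ∑ i ∈ Finset.univ.filter (fun i : Fin d => i ≠ ⟨0, by omega⟩), (x i) ^ 2
          ≤ (W / 3) ^ 2 →
        ‖∫ w in {w : EuclideanSpace ℝ (Fin d) |
              R / 2 ≤ |w ⟨0, by omega⟩| ∧ |w ⟨0, by omega⟩| < R},
            (‖w - x‖ ^ d)⁻¹ • (w - x) ∂(ENNReal.ofReal β • cylMeasure d (by omega) R W)‖ ≤
          C * β * W ^ (d - 2) / R ^ (d - 2) := by
  obtain ⟨n, rfl⟩ : ∃ n, d = n + 2 := ⟨d - 2, by omega⟩
  set K : ℝ := 2 * (2 * (n + 2) * ((n + 2 : ℝ) ^ (3 * (n + 1)) * 2 * 2 ^ n)) with hK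
  refine ⟨6 ^ (n + 1) * K, by positivity, fun R W β hR hW hβ _ x hx _ => ?_⟩
  set a : Fin (n + 2) := ⟨0, by omega⟩
  set S := {w : EuclideanSpace ℝ (Fin (n + 2)) | R / 2 ≤ |w a| ∧ |w a| < R}
  set ν := ENNReal.ofReal β • cylMeasure (n + 2) (by omega) R W
  have hνS : ν S ≤ ENNReal.ofReal (β * (K * R * W ^ n)) := by
    refine (measure_mono (Set.subset_univ S)).trans ?_
    rw [Measure.smul_apply, smul_eq_mul, ENNReal.ofReal_mul hβ.le]
    gcongr
    refine (cylMeasure_univ_le_ofReal (L := R) (by omega : 0 < n + 2) hW).trans_eq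
      (congrArg ENNReal.ofReal ?_)
    rw [show n + 2 - 1 = n + 1 from rfl, show n + 2 - 2 = n from rfl, hK]
    push_cast
    ring
  have hfar : ∀ w ∈ S, R / 6 ≤ ‖w - x‖ := fun w hw =>
    calc R / 6 ≤ |w a| - |x a| := by linarith [hw.1]
      _ ≤ |(w - x) a| := abs_sub_abs_le_abs_sub _ _
      _ ≤ ‖w - x‖ := PiLp.norm_apply_le (w - x) a
  calc _ ≤ ((R / 6) ^ (n + 1))⁻¹ * ν.real S :=
        norm_setIntegral_le_of_norm_le_const (hνS.trans_lt ENNReal.ofReal_lt_top)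
          fun w hw => norm_inv_norm_pow_succ_smul_le (by positivity) (hfar w hw) (n + 1)
    _ ≤ ((R / 6) ^ (n + 1))⁻¹ * (β * (K * R * W ^ n)) := by
        gcongr
        exact ENNReal.toReal_le_of_le_ofReal (by positivity) hνS
    _ = 6 ^ (n + 1) * K * β * W ^ (n + 2 - 2) / R ^ (n + 2 - 2) := by
        simp only [Nat.add_sub_cancel, div_pow, pow_succ]
        field_simp
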